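/- arXiv:2003.07055 — 2 statements merged into one kernel-verified Lean document; each statement's English description precedes it below -/
import Mathlib

section
/- Let Z₀ = {(0,1),(1,1),(1,0),(1,2)} ⊆ ℤ², 𝒵₀ := {k ∈ ℤ² : k ∈ Z₀ or −k ∈ Z₀}, and for n ≥ 1, 𝒵ₙ := {k + ℓ : k ∈ 𝒵ₙ₋₁, ℓ ∈ 𝒵₀, k₂ℓ₁ − k₁ℓ₂ ≠ 0, |k| ≠ |ℓ|}. Let Ẑ₀ = {(0,1),(1,1),(0,−1),(−1,−1)} and for n ≥ 1, Ẑₙ := {k + ℓ : k ∈ Ẑₙ₋₁, ℓ ∈ Ẑ₀, k₂ℓ₁ − k₁ℓ₂ ≠ 0, |k| ≠ |ℓ|}. Then 𝒵₀ = Ẑ₀ ∪ Ẑ₁, and for every n ≥ 0 one has Ẑₙ ∪ Ẑₙ₊₁ ⊆ 𝒵ₙ. -/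
/-- The set of stochastically forced modes. -/
def Zforce : Set (ℤ × ℤ) := {(0, 1), (1, 1), (1, 0), (1, 2)}

/-- Euclidean norm of an integer vector. -/
noncomputable def znorm (k : ℤ × ℤ) : ℝ := Real.sqrt ((k.1 : ℝ) ^ 2 + (k.2 : ℝ) ^ 2)

/-- One step of the generating procedure: from the set `A`, using directions `ℓ ∈ S`. -/
def Znext (S A : Set (ℤ × ℤ)) : Set (ℤ × ℤ) :=
  {p | ∃ k ∈ A, ∃ l ∈ S, k.2 * l.1 - k.1 * l.2 ≠ 0 ∧ znorm k ≠ znorm l ∧ p = k + l}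

/-- The sets `𝒵ₙ` of the paper. -/
def Zcal : ℕ → Set (ℤ × ℤ)
  | 0 => {k | k ∈ Zforce ∨ -k ∈ Zforce}
  | n + 1 => Znext {k | k ∈ Zforce ∨ -k ∈ Zforce} (Zcal n)

/-- The set `Ẑ₀`. -/
def Zhat0 : Set (ℤ × ℤ) := {(0, 1), (1, 1), (0, -1), (-1, -1)}

/-- The sets `Ẑₙ`. -/
def Zhat : ℕ → Set (ℤ × ℤ)
  | 0 => Zhat0
  | n + 1 => Znext Zhat0 (Zhat n)

lemma znorm_ne (k l : ℤ × ℤ) (h : k.1^2 + k.2^2 ≠ l.1^2 + l.2^2) : znorm k ≠ znorm l := by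
  simp only [znorm]
  intro heq
  apply h
  have h1 : (k.1:ℝ)^2 + (k.2:ℝ)^2 = (l.1:ℝ)^2 + (l.2:ℝ)^2 :=
    (Real.sqrt_inj (by positivity) (by positivity)).mp heq
  exact_mod_cast h1

lemma Znext_mono {S S' A A' : Set (ℤ × ℤ)} (hS : S ⊆ S') (hA : A ⊆ A') :
    Znext S A ⊆ Znext S' A' := by
  rintro p ⟨k, hk, l, hl, h1, h2, h3⟩
  exact ⟨k, hA hk, l, hS hl, h1, h2, h3⟩

lemma zhat1_sub : Zhat 1 ⊆ Zcal 0 := by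
  rintro p ⟨k, hk, l, hl, hc, hn, rfl⟩
  simp only [Zhat, Zhat0, Set.mem_insert_iff, Set.mem_singleton_iff] at hk hl
  rcases hk with rfl | rfl | rfl | rfl <;> rcases hl with rfl | rfl | rfl | rfl <;>
    first
      | (exact absurd (by decide) hc)
      | (norm_num [Zcal, Zforce, Prod.ext_iff])

lemma zcal0_eq : Zcal 0 = Zhat 0 ∪ Zhat 1 := by
  apply Set.Subset.antisymm
  · intro p hp
    simp only [Zcal, Zforce, Set.mem_setOf_eq, Set.mem_insert_iff,
      Set.mem_singleton_iff] at hp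
    have e : ∀ q : ℤ × ℤ, -q = (0,1) ∨ -q = (1,1) ∨ -q = (1,0) ∨ -q = (1,2) →
        q = (0,-1) ∨ q = (-1,-1) ∨ q = (-1,0) ∨ q = (-1,-2) := by
      intro q hq
      rcases hq with h | h | h | h <;> [left; (right;left); (right;right;left); (right;right;right)] <;>
        (have := congrArg Neg.neg h; simpa using this)
    have hp' : p = (0,1) ∨ p = (1,1) ∨ p = (1,0) ∨ p = (1,2) ∨
        p = (0,-1) ∨ p = (-1,-1) ∨ p = (-1,0) ∨ p = (-1,-2) := by
      rcases hp with h | h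
      · tauto
      · have := e p h; tauto
    have m11 : ((0:ℤ),(1:ℤ)) ∈ Zhat0 := by left; rfl
    have m12 : ((1:ℤ),(1:ℤ)) ∈ Zhat0 := by right; left; rfl
    have m13 : ((0:ℤ),(-1:ℤ)) ∈ Zhat0 := by right; right; left; rfl
    have m14 : ((-1:ℤ),(-1:ℤ)) ∈ Zhat0 := by right; right; right; rfl
    rcases hp' with rfl | rfl | rfl | rfl | rfl | rfl | rfl | rfl
    · exact Or.inl m11
    · exact Or.inl m12
    · exact Or.inr ⟨(0,-1), m13, (1,1), m12, by norm_num, znorm_ne _ _ (by decide), by decide⟩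
    · exact Or.inr ⟨(0,1), m11, (1,1), m12, by norm_num, znorm_ne _ _ (by decide), by decide⟩
    · exact Or.inl m13
    · exact Or.inl m14
    · exact Or.inr ⟨(0,1), m11, (-1,-1), m14, by norm_num, znorm_ne _ _ (by decide), by decide⟩
    · exact Or.inr ⟨(0,-1), m13, (-1,-1), m14, by norm_num, znorm_ne _ _ (by decide), by decide⟩
  · intro p hp
    rcases hp with h | h
    · simp only [Zhat, Zhat0, Set.mem_insert_iff, Set.mem_singleton_iff] at h
      simp only [Zcal, Zforce, Set.mem_setOf_eq, Set.mem_insert_iff, Set.mem_singleton_iff]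
      rcases h with rfl | rfl | rfl | rfl <;> [exact Or.inl (by decide); exact Or.inl (by decide);
        exact Or.inr (by decide); exact Or.inr (by decide)]
    · exact zhat1_sub h

lemma zhat0_sub : Zhat0 ⊆ Zcal 0 := by
  have := (zcal0_eq).symm ▸ (Set.subset_union_left : Zhat 0 ⊆ Zhat 0 ∪ Zhat 1)
  exact this

theorem Zcal_contains_Zhat :
    Zcal 0 = Zhat 0 ∪ Zhat 1 ∧ ∀ n : ℕ, Zhat n ∪ Zhat (n + 1) ⊆ Zcal n := by
  refine ⟨zcal0_eq, ?_⟩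
  have key : ∀ n, Zhat n ⊆ Zcal n ∧ Zhat (n+1) ⊆ Zcal n := by
    intro n
    induction n with
    | zero => exact ⟨zcal0_eq ▸ Set.subset_union_left, zcal0_eq ▸ Set.subset_union_right⟩
    | succ n ih =>
      have h1 : Zhat (n+1) ⊆ Zcal (n+1) := by
        show Znext Zhat0 (Zhat n) ⊆ Znext {k | k ∈ Zforce ∨ -k ∈ Zforce} (Zcal n)
        exact Znext_mono zhat0_sub ih.1
      have h2 : Zhat (n+2) ⊆ Zcal (n+1) := by
        show Znext Zhat0 (Zhat (n+1)) ⊆ Znext {k | k ∈ Zforce ∨ -k ∈ Zforce} (Zcal n)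
        exact Znext_mono zhat0_sub ih.2
      exact ⟨h1, h2⟩
  exact fun n => Set.union_subset (key n).1 (key n).2
end

section
/- For all k, ℓ ∈ ℤ² ∖ {(0,0)} with k + ℓ ≠ (0,0), and with a = (k₂ℓ₁ − k₁ℓ₂)/(|k||ℓ|), the L² pairing over [−π,π]² satisfies ⟨𝒥^{0,1}_{k,ℓ} + 𝒥^{0,1}_{ℓ,k}, e^0_{k+ℓ}⟩_{L²} = 2π²·a·(|k|² − |ℓ|²)/|k+ℓ|. -/
/-- The pairing `k · x = k₁x₁ + k₂x₂`. -/
noncomputable def kdot (k : ℤ × ℤ) (x : ℝ × ℝ) : ℝ := (k.1 : ℝ) * x.1 + (k.2 : ℝ) * x.2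

/-- The vector field `e_k^0(x) = (k₂/|k|, −k₁/|k|)·cos(k·x)`. -/
noncomputable def e0 (k : ℤ × ℤ) : ℝ × ℝ → ℝ × ℝ := fun x =>
  (((k.2 : ℝ) / znorm k) * Real.cos (kdot k x), (-(k.1 : ℝ) / znorm k) * Real.cos (kdot k x))

/-- The vector field `e_k^1(x) = (−k₂/|k|, k₁/|k|)·sin(k·x)`. -/
noncomputable def e1 (k : ℤ × ℤ) : ℝ × ℝ → ℝ × ℝ := fun x =>
  ((-(k.2 : ℝ) / znorm k) * Real.sin (kdot k x), ((k.1 : ℝ) / znorm k) * Real.sin (kdot k x))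

/-- The advection `b(u,v) = (u·∇)v`, i.e. the derivative of `v` in the direction `u`. -/
noncomputable def adv (u v : ℝ × ℝ → ℝ × ℝ) : ℝ × ℝ → ℝ × ℝ := fun x => fderiv ℝ v x (u x)

/-- The `L²` pairing `⟨f,g⟩ = ∫_{[−π,π]²} f(x)·g(x) dx`. -/
noncomputable def pairL2 (f g : ℝ × ℝ → ℝ × ℝ) : ℝ :=
  ∫ x in Set.Icc ((-Real.pi, -Real.pi) : ℝ × ℝ) ((Real.pi, Real.pi) : ℝ × ℝ),
    ((f x).1 * (g x).1 + (f x).2 * (g x).2)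

/-- `𝒥^{0,1}_{k,ℓ} = b(e_k^0, e_ℓ^1) + b(e_ℓ^1, e_k^0)`. -/
noncomputable def J01 (k l : ℤ × ℤ) : ℝ × ℝ → ℝ × ℝ := fun x =>
  adv (e0 k) (e1 l) x + adv (e1 l) (e0 k) x

/-- `𝒥^{0,0}_{k,ℓ} = b(e_k^0, e_ℓ^0) + b(e_ℓ^0, e_k^0)`. -/
noncomputable def J00 (k l : ℤ × ℤ) : ℝ × ℝ → ℝ × ℝ := fun x =>
  adv (e0 k) (e0 l) x + adv (e0 l) (e0 k) x

/-- `𝒥^{1,1}_{k,ℓ} = b(e_k^1, e_ℓ^1) + b(e_ℓ^1, e_k^1)`. -/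
noncomputable def J11 (k l : ℤ × ℤ) : ℝ × ℝ → ℝ × ℝ := fun x =>
  adv (e1 k) (e1 l) x + adv (e1 l) (e1 k) x

/-- `𝒵^{0,1}_{k,ℓ} = b(e_k^0, e_ℓ^1) − b(e_ℓ^1, e_k^0)`. -/
noncomputable def Z01 (k l : ℤ × ℤ) : ℝ × ℝ → ℝ × ℝ := fun x =>
  adv (e0 k) (e1 l) x - adv (e1 l) (e0 k) x

/-- `𝒵^{0,0}_{k,ℓ} = b(e_k^0, e_ℓ^0) − b(e_ℓ^0, e_k^0)`. -/
noncomputable def Z00 (k l : ℤ × ℤ) : ℝ × ℝ → ℝ × ℝ := fun x =>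
  adv (e0 k) (e0 l) x - adv (e0 l) (e0 k) x

/-- `𝒵^{1,1}_{k,ℓ} = b(e_k^1, e_ℓ^1) − b(e_ℓ^1, e_k^1)`. -/
noncomputable def Z11 (k l : ℤ × ℤ) : ℝ × ℝ → ℝ × ℝ := fun x =>
  adv (e1 k) (e1 l) x - adv (e1 l) (e1 k) x

open Real MeasureTheory

noncomputable def kclm (k : ℤ × ℤ) : ℝ × ℝ →L[ℝ] ℝ :=
  (k.1 : ℝ) • (ContinuousLinearMap.fst ℝ ℝ ℝ) + (k.2 : ℝ) • (ContinuousLinearMap.snd ℝ ℝ ℝ)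

lemma kclm_apply (k : ℤ × ℤ) (w : ℝ × ℝ) : kclm k w = kdot k w := by
  simp [kclm, kdot]

lemma hasFDerivAt_kdot (k : ℤ × ℤ) (x : ℝ × ℝ) : HasFDerivAt (kdot k) (kclm k) x := by
  have : kdot k = fun w => kclm k w := by funext w; rw [kclm_apply]
  rw [this]
  exact (kclm k).hasFDerivAt

lemma hasFDerivAt_sin_kdot (k : ℤ × ℤ) (x : ℝ × ℝ) :
    HasFDerivAt (fun x => Real.sin (kdot k x)) (Real.cos (kdot k x) • kclm k) x :=
  (Real.hasDerivAt_sin (kdot k x)).comp_hasFDerivAt x (hasFDerivAt_kdot k x)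

lemma hasFDerivAt_cos_kdot (k : ℤ × ℤ) (x : ℝ × ℝ) :
    HasFDerivAt (fun x => Real.cos (kdot k x)) ((-Real.sin (kdot k x)) • kclm k) x :=
  (Real.hasDerivAt_cos (kdot k x)).comp_hasFDerivAt x (hasFDerivAt_kdot k x)

lemma hasFDerivAt_e1 (k : ℤ × ℤ) (x : ℝ × ℝ) :
    HasFDerivAt (e1 k)
      ((((-(k.2 : ℝ) / znorm k) * Real.cos (kdot k x)) • kclm k).prod
        ((((k.1 : ℝ) / znorm k) * Real.cos (kdot k x)) • kclm k)) x := by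
  have h1 := (hasFDerivAt_sin_kdot k x).const_mul (-(k.2 : ℝ) / znorm k)
  have h2 := (hasFDerivAt_sin_kdot k x).const_mul ((k.1 : ℝ) / znorm k)
  have := h1.prodMk h2
  simp only [smul_smul] at this
  exact this

lemma hasFDerivAt_e0 (k : ℤ × ℤ) (x : ℝ × ℝ) :
    HasFDerivAt (e0 k)
      (((((k.2 : ℝ) / znorm k) * (-Real.sin (kdot k x))) • kclm k).prod
        (((-(k.1 : ℝ) / znorm k) * (-Real.sin (kdot k x))) • kclm k)) x := by
  have h1 := (hasFDerivAt_cos_kdot k x).const_mul ((k.2 : ℝ) / znorm k)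
  have h2 := (hasFDerivAt_cos_kdot k x).const_mul (-(k.1 : ℝ) / znorm k)
  have := h1.prodMk h2
  simp only [smul_smul] at this
  exact this

lemma adv_e1 (k : ℤ × ℤ) (u : ℝ × ℝ → ℝ × ℝ) (x : ℝ × ℝ) :
    adv u (e1 k) x =
      ((-(k.2 : ℝ) / znorm k) * Real.cos (kdot k x) * kdot k (u x),
       ((k.1 : ℝ) / znorm k) * Real.cos (kdot k x) * kdot k (u x)) := by
  rw [adv, (hasFDerivAt_e1 k x).fderiv]
  simp [kclm_apply, mul_assoc]

lemma adv_e0 (k : ℤ × ℤ) (u : ℝ × ℝ → ℝ × ℝ) (x : ℝ × ℝ) :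
    adv u (e0 k) x =
      (((k.2 : ℝ) / znorm k) * (-Real.sin (kdot k x)) * kdot k (u x),
       (-(k.1 : ℝ) / znorm k) * (-Real.sin (kdot k x)) * kdot k (u x)) := by
  rw [adv, (hasFDerivAt_e0 k x).fderiv]
  simp [kclm_apply, mul_assoc]

lemma znorm_pos {k : ℤ × ℤ} (hk : k ≠ (0, 0)) : 0 < znorm k := by
  have h : ¬((k.1 : ℝ) = 0 ∧ (k.2 : ℝ) = 0) := by
    rintro ⟨h1, h2⟩
    exact hk (Prod.ext (by exact_mod_cast h1) (by exact_mod_cast h2))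
  refine Real.sqrt_pos.mpr ?_
  rcases not_and_or.mp h with h | h <;> positivity

lemma znorm_sq {k : ℤ × ℤ} : znorm k ^ 2 = (k.1 : ℝ) ^ 2 + (k.2 : ℝ) ^ 2 :=
  Real.sq_sqrt (by positivity)

-- pointwise identity
lemma pointwise (k l : ℤ × ℤ) (hk : k ≠ (0, 0)) (hl : l ≠ (0, 0)) (hkl : k + l ≠ (0, 0))
    (a : ℝ) (ha : a = ((k.2 : ℝ) * (l.1 : ℝ) - (k.1 : ℝ) * (l.2 : ℝ)) / (znorm k * znorm l))
    (x : ℝ × ℝ) :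
    ((J01 k l x + J01 l k x).1 * (e0 (k + l) x).1 +
      (J01 k l x + J01 l k x).2 * (e0 (k + l) x).2) =
      (a * ((znorm k) ^ 2 - (znorm l) ^ 2) / znorm (k + l)) * Real.cos (kdot (k + l) x) ^ 2 := by
  have hnk := (znorm_pos hk).ne'
  have hnl := (znorm_pos hl).ne'
  have hnkl := (znorm_pos hkl).ne'
  have hdot : kdot (k + l) x = kdot k x + kdot l x := by
    simp [kdot]; ring
  have hJ : ∀ x, J01 k l x + J01 l k x =
      ((a * ((k.2 : ℝ) - (l.2 : ℝ))) * Real.cos (kdot (k + l) x),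
       (a * ((l.1 : ℝ) - (k.1 : ℝ))) * Real.cos (kdot (k + l) x)) := by
    intro x
    have hdot : kdot (k + l) x = kdot k x + kdot l x := by
      simp [kdot]; ring
    rw [J01, J01, adv_e1 l (e0 k) x, adv_e0 k (e1 l) x, adv_e1 k (e0 l) x, adv_e0 l (e1 k) x]
    rw [Prod.mk_add_mk, Prod.mk_add_mk, Prod.mk_add_mk, Prod.mk.injEq]
    rw [hdot, Real.cos_add, e0, e1, e0, e1, kdot, kdot, kdot, kdot]
    simp only [kdot]
    subst ha
    constructor <;> (field_simp; ring)
  rw [hJ x]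
  have hz2 : znorm (k+l) * znorm (k+l) = ((k.1:ℝ)+(l.1:ℝ))^2 + ((k.2:ℝ)+(l.2:ℝ))^2 := by
    have h := @znorm_sq (k+l)
    simp only [Prod.fst_add, Prod.snd_add] at h
    push_cast at h
    nlinarith [h]
  rw [e0]
  simp only
  rw [show ((k+l).1 : ℝ) = (k.1:ℝ)+(l.1:ℝ) by simp,
      show ((k+l).2 : ℝ) = (k.2:ℝ)+(l.2:ℝ) by simp]
  rw [znorm_sq, znorm_sq]
  field_simp
  nlinarith [hz2, sq_nonneg (Real.cos (kdot (k+l) x))]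

lemma integral_cos_sq_shift (m : ℤ) (hm : m ≠ 0) (θ : ℝ) :
    ∫ t in (-π)..π, Real.cos ((m:ℝ)*t + θ)^2 = π := by
  have hm' : (m:ℝ) ≠ 0 := Int.cast_ne_zero.mpr hm
  have hF : ∀ t : ℝ, HasDerivAt (fun t => t/2 + Real.sin (2*((m:ℝ)*t+θ))/(4*(m:ℝ)))
      (Real.cos ((m:ℝ)*t+θ)^2) t := by
    intro t
    have h1 : HasDerivAt (fun t : ℝ => 2*((m:ℝ)*t+θ)) (2*(m:ℝ)) t := by
      simpa using (((hasDerivAt_id t).const_mul (m:ℝ)).add_const θ).const_mul 2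
    have h2 := (Real.hasDerivAt_sin (2*((m:ℝ)*t+θ))).comp t h1
    have h3 := ((hasDerivAt_id t).div_const 2).add (h2.div_const (4*(m:ℝ)))
    refine h3.congr_deriv ?_
    rw [Real.cos_sq]
    field_simp
    ring
  rw [intervalIntegral.integral_eq_sub_of_hasDerivAt (fun t _ => hF t)
      (by apply Continuous.intervalIntegrable; continuity)]
  have e1 : 2*((m:ℝ)*π+θ) = 2*θ + (m:ℤ)*(2*π) := by push_cast; ring
  have e2 : 2*((m:ℝ)*(-π)+θ) = 2*θ + ((-m:ℤ):ℝ)*(2*π) := by push_cast; ring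
  rw [e1, e2, Real.sin_add_int_mul_two_pi, Real.sin_add_int_mul_two_pi]
  ring

lemma icc_to_interval (f : ℝ → ℝ) :
    ∫ t in Set.Icc (-π) π, f t = ∫ t in (-π)..π, f t := by
  rw [MeasureTheory.integral_Icc_eq_integral_Ioc,
    intervalIntegral.intervalIntegral_eq_integral_uIoc]
  rw [Set.uIoc_of_le (by linarith [Real.pi_pos] : (-π:ℝ) ≤ π)]
  rw [if_pos (by linarith [Real.pi_pos] : (-π:ℝ) ≤ π)]
  simp

lemma integral_cos2 (m : ℤ × ℤ) (hm : m ≠ (0,0)) :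
    ∫ x in Set.Icc ((-π, -π) : ℝ × ℝ) ((π, π) : ℝ × ℝ), Real.cos (kdot m x)^2
      = 2*π^2 := by
  have hcont : Continuous (fun x : ℝ × ℝ => Real.cos (kdot m x)^2) := by
    unfold kdot; continuity
  have hicc : Set.Icc ((-π, -π) : ℝ × ℝ) ((π, π) : ℝ × ℝ)
      = Set.Icc (-π) π ×ˢ Set.Icc (-π) π := by
    rw [Set.Icc_prod_eq]
  have hint : IntegrableOn (fun x : ℝ × ℝ => Real.cos (kdot m x)^2)
      (Set.Icc ((-π, -π) : ℝ × ℝ) ((π, π) : ℝ × ℝ)) volume :=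
    hcont.continuousOn.integrableOn_compact isCompact_Icc
  rw [hicc] at hint ⊢
  rw [MeasureTheory.Measure.volume_eq_prod ℝ ℝ] at hint ⊢
  rw [MeasureTheory.setIntegral_prod _ hint]
  simp only [kdot]
  have hvol : (volume (Set.Icc (-π) π)).toReal = 2*π := by
    rw [Real.volume_Icc]
    rw [ENNReal.toReal_ofReal (by linarith [Real.pi_pos])]
    ring
  by_cases h2 : m.2 = 0
  · have h1 : m.1 ≠ 0 := by
      intro h1; exact hm (Prod.ext h1 h2)
    have inner : ∀ x : ℝ, (∫ y in Set.Icc (-π) π,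
        Real.cos ((m.1:ℝ)*x + (m.2:ℝ)*y)^2) = (2*π) * Real.cos ((m.1:ℝ)*x)^2 := by
      intro x
      rw [h2]
      push_cast
      simp only [zero_mul, add_zero]
      rw [MeasureTheory.setIntegral_const, measureReal_def, hvol, smul_eq_mul]
    rw [MeasureTheory.setIntegral_congr_fun measurableSet_Icc (fun x _ => inner x)]
    rw [MeasureTheory.integral_const_mul, icc_to_interval]
    have : ∀ x : ℝ, Real.cos ((m.1:ℝ)*x)^2 = Real.cos ((m.1:ℝ)*x + 0)^2 := by
      intro x; rw [add_zero]
    simp only [this]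
    rw [integral_cos_sq_shift m.1 h1 0]
    ring
  · have inner : ∀ x : ℝ, (∫ y in Set.Icc (-π) π,
        Real.cos ((m.1:ℝ)*x + (m.2:ℝ)*y)^2) = π := by
      intro x
      rw [icc_to_interval]
      have : ∀ y : ℝ, Real.cos ((m.1:ℝ)*x + (m.2:ℝ)*y)^2
          = Real.cos ((m.2:ℝ)*y + (m.1:ℝ)*x)^2 := by
        intro y; rw [add_comm]
      simp only [this]
      exact integral_cos_sq_shift m.2 h2 ((m.1:ℝ)*x)
    rw [MeasureTheory.setIntegral_congr_fun measurableSet_Icc (fun x _ => inner x)]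
    rw [MeasureTheory.setIntegral_const, measureReal_def, hvol, smul_eq_mul]
    ring

theorem J01_sum_pairing (k l : ℤ × ℤ) (hk : k ≠ (0, 0)) (hl : l ≠ (0, 0))
    (hkl : k + l ≠ (0, 0))
    (a : ℝ) (ha : a = ((k.2 : ℝ) * (l.1 : ℝ) - (k.1 : ℝ) * (l.2 : ℝ)) / (znorm k * znorm l)) :
    pairL2 (fun x => J01 k l x + J01 l k x) (e0 (k + l)) =
      2 * Real.pi ^ 2 * a * ((znorm k) ^ 2 - (znorm l) ^ 2) / znorm (k + l) := by
  rw [pairL2]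
  rw [MeasureTheory.setIntegral_congr_fun measurableSet_Icc
      (fun x _ => pointwise k l hk hl hkl a ha x)]
  rw [MeasureTheory.integral_const_mul, integral_cos2 (k+l) hkl]
  field_simp
end
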